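/- arXiv:1811.10406 — 9 statements merged into one kernel-verified Lean document; each statement's English description precedes it below -/
import Mathlib

section
/- Let V be a real vector space and J : V → V a linear map with J² = p J + q I, where p² + 4q ≠ 0. Let A : V → V be any linear map satisfying A ∘ J + J ∘ A = p A. Define B := (1/(p² + 4q)) (2 J ∘ A − p A). Then J ∘ B − B ∘ J = A. (This is the algebraic identity underlying the fact that the metallic natural connection D = ∇ + (2/(p²+4q)) J(∇J) − (p/(p²+4q)) ∇J satisfies D J = 0, with A playing the role of ∇_X J.) -/
section Commutator

variable {K R : Type*} [CommRing K] [Ring R] [Algebra K R] {J A : R} {p q : K}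

theorem commutator_two_mul_sub_smul_eq
    (hJ : J ^ 2 = p • J + q • (1 : R)) (hA : A * J + J * A = p • A) :
    J * ((2 : K) • (J * A) - p • A) - ((2 : K) • (J * A) - p • A) * J = (p ^ 2 + 4 * q) • A := by
  have hAJ : A * J = p • A - J * A := eq_sub_of_add_eq hA
  have hJJA : J * (J * A) = p • (J * A) + q • A := by
    rw [← mul_assoc, ← sq, hJ, add_mul, smul_mul_assoc, smul_mul_assoc, one_mul]
  have hJAJ : J * A * J = -q • A := by
    rw [mul_assoc, hAJ, mul_sub, mul_smul_comm, hJJA]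
    module
  rw [mul_sub, sub_mul, mul_smul_comm, mul_smul_comm, hJJA, smul_mul_assoc, smul_mul_assoc, hJAJ,
    hAJ]
  module

end Commutator

/-- If `J² = p J + q I` with `p² + 4q ≠ 0` and `A ∘ J + J ∘ A = p A`,
then `B := (1/(p²+4q))(2 J ∘ A - p A)` satisfies `J ∘ B - B ∘ J = A`.
(Algebraic identity underlying `D J = 0` for the metallic natural connection.) -/
theorem metallic_natural_connection_DJ
    (V : Type*) [AddCommGroup V] [Module ℝ V]
    (J A : Module.End ℝ V) (p q : ℝ)
    (hJ : J ^ 2 = p • J + q • (1 : Module.End ℝ V))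
    (hpq : p ^ 2 + 4 * q ≠ 0)
    (hA : A * J + J * A = p • A) :
    J * ((1 / (p ^ 2 + 4 * q)) • ((2 : ℝ) • (J * A) - p • A)) -
      ((1 / (p ^ 2 + 4 * q)) • ((2 : ℝ) • (J * A) - p • A)) * J = A := by
  rw [mul_smul_comm, smul_mul_assoc, ← smul_sub, commutator_two_mul_sub_smul_eq hJ hA, smul_smul,
    one_div_mul_cancel hpq, one_smul]
end

section
/- Let V be a real vector space, g a symmetric bilinear form on V, and J : V → V a linear map with J² = p J + q I, where p² + 4q ≠ 0. Assume J is g-symmetric and let A : V → V be a linear map which is g-symmetric and satisfies A ∘ J + J ∘ A = p A. Define B := (1/(p² + 4q)) (2 J ∘ A − p A). Then B is g-skew-symmetric: g(B X, Y) + g(X, B Y) = 0 for all X, Y ∈ V. (This is the algebraic identity underlying the fact that the metallic natural connection D = ∇ + (2/(p²+4q)) J(∇J) − (p/(p²+4q)) ∇J satisfies D g = 0.) -/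
/-!
Since `A J + J A = p A`, the operator `2 J A - p A` is the commutator `J A - A J` of two
`g`-self-adjoint operators, hence `g`-skew-adjoint, and so is any scalar multiple of it.
-/

namespace LinearMap

variable {R M N : Type*} [CommRing R] [AddCommGroup M] [Module R M] [AddCommGroup N]
  [Module R N] {B : M →ₗ[R] M →ₗ[R] N}

theorem IsSelfAdjoint.lie_mem_skewAdjointSubmodule {f h : Module.End R M}
    (hf : B.IsSelfAdjoint f) (hh : B.IsSelfAdjoint h) : ⁅f, h⁆ ∈ B.skewAdjointSubmodule := by
  rw [mem_skewAdjointSubmodule, Ring.lie_def]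
  intro x y
  rw [← LinearMap.coe_neg, neg_sub]
  exact (hf.mul hh).sub (hh.mul hf) x y

theorem IsSkewAdjoint.apply_add_apply_eq_zero {f : M → M} (hf : B.IsSkewAdjoint f) (x y : M) :
    B (f x) y + B x (f y) = 0 := by
  rw [hf x y, Pi.neg_apply, map_neg, neg_add_cancel]

end LinearMap

theorem metallic_natural_connection_Dg_general
    (V : Type*) [AddCommGroup V] [Module ℝ V]
    (g : LinearMap.BilinForm ℝ V)
    (J A : Module.End ℝ V) (p q : ℝ)
    (hJsym : ∀ X Y : V, g (J X) Y = g X (J Y))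
    (hAsym : ∀ X Y : V, g (A X) Y = g X (A Y))
    (hA : A * J + J * A = p • A) :
    ∀ X Y : V,
      g (((1 / (p ^ 2 + 4 * q)) • ((2 : ℝ) • (J * A) - p • A)) X) Y +
        g X (((1 / (p ^ 2 + 4 * q)) • ((2 : ℝ) • (J * A) - p • A)) Y) = 0 := by
  have h_commutator : (2 : ℝ) • (J * A) - p • A = ⁅J, A⁆ := by
    rw [← hA, Ring.lie_def, two_smul]
    abel
  have h_skew :
      (1 / (p ^ 2 + 4 * q)) • ((2 : ℝ) • (J * A) - p • A) ∈ g.skewAdjointSubmodule := by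
    rw [h_commutator]
    exact Submodule.smul_mem _ _
      (LinearMap.IsSelfAdjoint.lie_mem_skewAdjointSubmodule hJsym hAsym)
  exact ((LinearMap.mem_skewAdjointSubmodule _).mp h_skew).apply_add_apply_eq_zero

/-- If `g` is a symmetric bilinear form, `J` is `g`-symmetric with
`J² = p J + q I`, `p² + 4q ≠ 0`, and `A` is `g`-symmetric with `A ∘ J + J ∘ A = p A`,
then `B := (1/(p²+4q))(2 J ∘ A - p A)` is `g`-skew-symmetric.
(Algebraic identity underlying `D g = 0` for the metallic natural connection.) -/
theorem metallic_natural_connection_Dg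
    (V : Type*) [AddCommGroup V] [Module ℝ V]
    (g : LinearMap.BilinForm ℝ V) (hgsymm : ∀ X Y : V, g X Y = g Y X)
    (J A : Module.End ℝ V) (p q : ℝ)
    (hJ : J ^ 2 = p • J + q • (1 : Module.End ℝ V))
    (hpq : p ^ 2 + 4 * q ≠ 0)
    (hJsym : ∀ X Y : V, g (J X) Y = g X (J Y))
    (hAsym : ∀ X Y : V, g (A X) Y = g X (A Y))
    (hA : A * J + J * A = p • A) :
    ∀ X Y : V,
      g (((1 / (p ^ 2 + 4 * q)) • ((2 : ℝ) • (J * A) - p • A)) X) Y +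
        g X (((1 / (p ^ 2 + 4 * q)) • ((2 : ℝ) • (J * A) - p • A)) Y) = 0 :=
  metallic_natural_connection_Dg_general V g J A p q hJsym hAsym hA
end

section
/- Let V be a real vector space, g a symmetric bilinear form on V, and J : V → V a g-symmetric linear map with J² = p J + q I for real numbers p, q. Let ♭_g : V → V* be the map X ↦ g(X, ·) and J* : V* → V* the dual (transpose) of J. Define Ĵ : V ⊕ V* → V ⊕ V* by Ĵ(X, α) := (J X, ♭_g(X) − J*(α) + p α). Then Ĵ² = p Ĵ + q Id on V ⊕ V*. -/
/-!
In block form `Ĵ = [[J, 0], [♭_g, p - J*]]` on `V × V*`. For a lower triangular block operator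
`[[A, 0], [B, D]]` the relation `x² = p x + q` holds as soon as it holds for both diagonal blocks
and `B A + D B = p B`. Transposition reverses products, so `J*` satisfies the relation of `J`, and
then so does `p - J*`, the other root of `x² - p x - q`. The off-diagonal condition reduces to
`♭_g ∘ J = J* ∘ ♭_g`, which is the `g`-symmetry of `J`.
-/

open Module

section BlockLowerTriangular

variable {R M N : Type*} [CommSemiring R] [AddCommMonoid M] [Module R M]
  [AddCommMonoid N] [Module R N]

def blockLowerTriangular (A : End R M) (B : M →ₗ[R] N) (D : End R N) : End R (M × N) :=
  (A ∘ₗ LinearMap.fst R M N).prod (B ∘ₗ LinearMap.fst R M N + D ∘ₗ LinearMap.snd R M N)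

@[simp]
theorem blockLowerTriangular_apply (A : End R M) (B : M →ₗ[R] N) (D : End R N) (σ : M × N) :
    blockLowerTriangular A B D σ = (A σ.1, B σ.1 + D σ.2) :=
  rfl

theorem blockLowerTriangular_sq {A : End R M} {B : M →ₗ[R] N} {D : End R N} {p q : R}
    (hA : A ^ 2 = p • A + q • 1) (hD : D ^ 2 = p • D + q • 1)
    (hB : B ∘ₗ A + D ∘ₗ B = p • B) :
    blockLowerTriangular A B D ^ 2 = p • blockLowerTriangular A B D + q • 1 := by
  refine LinearMap.ext fun σ => ?_
  have hA' := LinearMap.congr_fun hA σ.1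
  have hD' := LinearMap.congr_fun hD σ.2
  have hB' := LinearMap.congr_fun hB σ.1
  simp only [pow_two, End.mul_apply, LinearMap.add_apply, LinearMap.smul_apply, End.one_apply,
    LinearMap.comp_apply] at hA' hD' hB' ⊢
  simp only [blockLowerTriangular_apply, map_add, Prod.ext_iff, Prod.fst_add, Prod.snd_add,
    Prod.smul_fst, Prod.smul_snd]
  refine ⟨hA', ?_⟩
  rw [← add_assoc, hB', hD', smul_add]
  abel

end BlockLowerTriangular

theorem LinearMap.dualMap_sq {R M : Type*} [CommSemiring R] [AddCommMonoid M] [Module R M]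
    {J : End R M} {p q : R} (hJ : J ^ 2 = p • J + q • 1) :
    J.dualMap ^ 2 = p • J.dualMap + q • 1 := by
  calc J.dualMap ^ 2 = (J ^ 2).dualMap := rfl
    _ = p • J.dualMap + q • 1 := by rw [hJ]; ext; simp

theorem smul_one_sub_sq {R A : Type*} [CommRing R] [Ring A] [Algebra R A] {a : A} {p q : R}
    (ha : a ^ 2 = p • a + q • 1) : (p • 1 - a) ^ 2 = p • (p • 1 - a) + q • 1 := by
  rw [sq, sub_mul, mul_sub, mul_sub, smul_one_mul, smul_one_mul, mul_smul_one, ← sq, ha]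
  module

theorem LinearMap.IsAdjointPair.comp_eq_dualMap_comp {R M M₁ : Type*} [CommSemiring R]
    [AddCommMonoid M] [Module R M] [AddCommMonoid M₁] [Module R M₁]
    {B : LinearMap.BilinForm R M} {B' : LinearMap.BilinForm R M₁} {f : M →ₗ[R] M₁}
    {g : M₁ →ₗ[R] M} (h : IsAdjointPair B B' f g) : B' ∘ₗ f = g.dualMap ∘ₗ B :=
  isAdjointPair_iff_comp_eq_compl₂.mp h

theorem generalized_metallic_structure_general
    (V : Type*) [AddCommGroup V] [Module ℝ V]
    (g : LinearMap.BilinForm ℝ V)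
    (J : Module.End ℝ V)
    (hJsym : ∀ X Y : V, g (J X) Y = g X (J Y))
    (p q : ℝ) (hJ : J ^ 2 = p • J + q • (1 : Module.End ℝ V))
    (Jhat : V × Module.Dual ℝ V → V × Module.Dual ℝ V)
    (hJhat : ∀ σ : V × Module.Dual ℝ V,
      Jhat σ = (J σ.1, g σ.1 - σ.2 ∘ₗ (J : V →ₗ[ℝ] V) + p • σ.2)) :
    ∀ σ : V × Module.Dual ℝ V, Jhat (Jhat σ) = p • Jhat σ + q • σ := by
  have hJhat_eq : Jhat = blockLowerTriangular J g (p • 1 - J.dualMap) := by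
    funext σ
    rw [hJhat]
    simp only [blockLowerTriangular_apply, LinearMap.sub_apply, LinearMap.smul_apply,
      End.one_apply, J.dualMap_apply', add_sub_assoc', sub_add_eq_add_sub]
  have hD : (p • 1 - J.dualMap) ^ 2 = p • (p • 1 - J.dualMap) + q • 1 :=
    smul_one_sub_sq (A := End ℝ (Dual ℝ V)) (LinearMap.dualMap_sq hJ)
  have hB : g ∘ₗ J + (p • 1 - J.dualMap) ∘ₗ g = p • g := by
    rw [LinearMap.IsAdjointPair.comp_eq_dualMap_comp hJsym, LinearMap.sub_comp,
      LinearMap.smul_comp, End.one_eq_id, LinearMap.id_comp]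
    abel
  intro σ
  subst hJhat_eq
  exact LinearMap.congr_fun (blockLowerTriangular_sq hJ hD hB) σ

/-- If `J` is `g`-symmetric with `J² = p J + q I`, then
`Ĵ(X, α) := (J X, ♭_g X - J* α + p α)` satisfies `Ĵ² = p Ĵ + q Id` on `V ⊕ V*`. -/
theorem generalized_metallic_structure
    (V : Type*) [AddCommGroup V] [Module ℝ V]
    (g : LinearMap.BilinForm ℝ V) (hgsymm : ∀ X Y : V, g X Y = g Y X)
    (J : Module.End ℝ V)
    (hJsym : ∀ X Y : V, g (J X) Y = g X (J Y))
    (p q : ℝ) (hJ : J ^ 2 = p • J + q • (1 : Module.End ℝ V))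
    (Jhat : V × Module.Dual ℝ V → V × Module.Dual ℝ V)
    (hJhat : ∀ σ : V × Module.Dual ℝ V,
      Jhat σ = (J σ.1, g σ.1 - σ.2 ∘ₗ (J : V →ₗ[ℝ] V) + p • σ.2)) :
    ∀ σ : V × Module.Dual ℝ V, Jhat (Jhat σ) = p • Jhat σ + q • σ :=
  generalized_metallic_structure_general V g J hJsym p q hJ Jhat hJhat
end

section
/- Let V be a finite-dimensional real vector space, g a nondegenerate symmetric bilinear form on V, and J : V → V a g-symmetric linear map with J² = p J + q I, where p² + 4q ≠ 0. Define Ĵ : V ⊕ V* → V ⊕ V* by Ĵ(X, α) := (J X, ♭_g(X) − J*(α) + p α), and define the symmetric bilinear form ĝ on V ⊕ V* by ĝ(X + α, Y + β) := g(X, Y) + g(♯_g α, ♯_g β) + (p/(p²+4q))(α(Y) + β(X)) − (2/(p²+4q))(α(J Y) + β(J X)). Then Ĵ is ĝ-symmetric: ĝ(Ĵ(X+α), Y+β) = ĝ(X+α, Ĵ(Y+β)) for all X, Y ∈ V and α, β ∈ V*. -/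
/-!
Since `g (♯α) = α`, we have `g(♯α, ♯β) = α(♯β)`. Expanding `ĝ(Ĵσ, τ)` for `σ = (X, α)`,
`τ = (Y, β)` and reducing `J² = p J + q`, every term is symmetric under `σ ↔ τ` (by the
`g`-symmetry of `g` and `J`) except those pairing a covector with a vector. These collect into
`((p² + 2q)/D) (α(Y) + β(X)) - (p/D) (α(JY) + β(JX))`, `D = p² + 4q`, because the coefficients
`c₁ = p/D`, `c₂ = 2/D` of `ĝ` satisfy `p c₁ + 2q c₂ = 1` and `2 c₁ = p c₂`. Hence
`ĝ(Ĵσ, τ) = ĝ(Ĵτ, σ)`, and `ĝ` is symmetric.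
-/

open Module

namespace GeneralizedMetallic

variable {V : Type*} [AddCommGroup V] [Module ℝ V]
  (g : LinearMap.BilinForm ℝ V) (sharp : Dual ℝ V →ₗ[ℝ] V) (J : End ℝ V) (p q : ℝ)

def lift (σ : V × Dual ℝ V) : V × Dual ℝ V :=
  (J σ.1, g σ.1 - σ.2 ∘ₗ (J : V →ₗ[ℝ] V) + p • σ.2)

noncomputable def metric (σ τ : V × Dual ℝ V) : ℝ :=
  g σ.1 τ.1 + g (sharp σ.2) (sharp τ.2) +
    (p / (p ^ 2 + 4 * q)) * (σ.2 τ.1 + τ.2 σ.1) -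
    (2 / (p ^ 2 + 4 * q)) * (σ.2 (J τ.1) + τ.2 (J σ.1))

variable {g sharp J p q}

theorem apply_sharp_comm (hgsymm : ∀ X Y : V, g X Y = g Y X)
    (hflat_sharp : ∀ α : Dual ℝ V, g (sharp α) = α) (α β : Dual ℝ V) :
    α (sharp β) = β (sharp α) := by
  calc α (sharp β) = g (sharp α) (sharp β) := by rw [hflat_sharp]
    _ = β (sharp α) := by rw [hgsymm, hflat_sharp]

theorem apply_map_sharp_comm (hgsymm : ∀ X Y : V, g X Y = g Y X)
    (hflat_sharp : ∀ α : Dual ℝ V, g (sharp α) = α)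
    (hJsym : ∀ X Y : V, g (J X) Y = g X (J Y)) (α β : Dual ℝ V) :
    α (J (sharp β)) = β (J (sharp α)) := by
  calc α (J (sharp β)) = g (J (sharp α)) (sharp β) := by rw [hJsym, hflat_sharp]
    _ = β (J (sharp α)) := by rw [hgsymm, hflat_sharp]

theorem metric_comm (hgsymm : ∀ X Y : V, g X Y = g Y X)
    (hflat_sharp : ∀ α : Dual ℝ V, g (sharp α) = α) (σ τ : V × Dual ℝ V) :
    metric g sharp J p q σ τ = metric g sharp J p q τ σ := by
  simp only [metric, hflat_sharp, hgsymm σ.1, apply_sharp_comm hgsymm hflat_sharp σ.2]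
  ring

theorem metric_lift_left (hgsymm : ∀ X Y : V, g X Y = g Y X)
    (hflat_sharp : ∀ α : Dual ℝ V, g (sharp α) = α)
    (hJ : J ^ 2 = p • J + q • (1 : End ℝ V)) (hpq : p ^ 2 + 4 * q ≠ 0)
    (X Y : V) (α β : Dual ℝ V) :
    metric g sharp J p q (lift g J p (X, α)) (Y, β) =
      g (J X) Y + (p / (p ^ 2 + 4 * q)) * g X Y - (2 / (p ^ 2 + 4 * q)) * g X (J Y) -
        α (J (sharp β)) + p * α (sharp β) +
        ((p ^ 2 + 2 * q) / (p ^ 2 + 4 * q)) * (α Y + β X) -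
        (p / (p ^ 2 + 4 * q)) * (α (J Y) + β (J X)) := by
  have hJJ (x : V) : J (J x) = p • J x + q • x := by
    simpa [sq] using LinearMap.congr_fun hJ x
  have hflat_sharp_apply (X : V) : g X (sharp β) = β X := by rw [hgsymm, hflat_sharp]
  simp only [metric, lift, hflat_sharp, hflat_sharp_apply, hJJ, LinearMap.add_apply,
    LinearMap.sub_apply, LinearMap.smul_apply, LinearMap.comp_apply, map_add, map_smul, smul_eq_mul]
  field_simp
  ring

theorem metric_lift_left_comm (hgsymm : ∀ X Y : V, g X Y = g Y X)
    (hflat_sharp : ∀ α : Dual ℝ V, g (sharp α) = α)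
    (hJsym : ∀ X Y : V, g (J X) Y = g X (J Y))
    (hJ : J ^ 2 = p • J + q • (1 : End ℝ V)) (hpq : p ^ 2 + 4 * q ≠ 0) (σ τ : V × Dual ℝ V) :
    metric g sharp J p q (lift g J p σ) τ = metric g sharp J p q (lift g J p τ) σ := by
  obtain ⟨X, α⟩ := σ
  obtain ⟨Y, β⟩ := τ
  rw [metric_lift_left hgsymm hflat_sharp hJ hpq, metric_lift_left hgsymm hflat_sharp hJ hpq,
    apply_map_sharp_comm hgsymm hflat_sharp hJsym α, apply_sharp_comm hgsymm hflat_sharp α]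
  have hJXY : g (J X) Y = g (J Y) X := by rw [hJsym, hgsymm]
  have hXJY : g X (J Y) = g Y (J X) := by rw [← hJsym, hgsymm]
  rw [hJXY, hXJY, hgsymm X Y]
  ring

theorem metric_lift (hgsymm : ∀ X Y : V, g X Y = g Y X)
    (hflat_sharp : ∀ α : Dual ℝ V, g (sharp α) = α)
    (hJsym : ∀ X Y : V, g (J X) Y = g X (J Y))
    (hJ : J ^ 2 = p • J + q • (1 : End ℝ V)) (hpq : p ^ 2 + 4 * q ≠ 0) (σ τ : V × Dual ℝ V) :
    metric g sharp J p q (lift g J p σ) τ = metric g sharp J p q σ (lift g J p τ) := by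
  rw [metric_lift_left_comm hgsymm hflat_sharp hJsym hJ hpq, metric_comm hgsymm hflat_sharp]

end GeneralizedMetallic

theorem generalized_metallic_pseudoRiemannian_general
    (V : Type*) [AddCommGroup V] [Module ℝ V]
    (g : LinearMap.BilinForm ℝ V) (hgsymm : ∀ X Y : V, g X Y = g Y X)
    (sharp : Module.Dual ℝ V →ₗ[ℝ] V)
    (hflat_sharp : ∀ α : Module.Dual ℝ V, g (sharp α) = α)
    (J : Module.End ℝ V)
    (hJsym : ∀ X Y : V, g (J X) Y = g X (J Y))
    (p q : ℝ) (hJ : J ^ 2 = p • J + q • (1 : Module.End ℝ V))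
    (hpq : p ^ 2 + 4 * q ≠ 0)
    (Jhat : V × Module.Dual ℝ V → V × Module.Dual ℝ V)
    (hJhat : ∀ σ : V × Module.Dual ℝ V,
      Jhat σ = (J σ.1, g σ.1 - σ.2 ∘ₗ (J : V →ₗ[ℝ] V) + p • σ.2))
    (ghat : V × Module.Dual ℝ V → V × Module.Dual ℝ V → ℝ)
    (hghat : ∀ σ τ : V × Module.Dual ℝ V,
      ghat σ τ = g σ.1 τ.1 + g (sharp σ.2) (sharp τ.2) +
        (p / (p ^ 2 + 4 * q)) * (σ.2 τ.1 + τ.2 σ.1) -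
        (2 / (p ^ 2 + 4 * q)) * (σ.2 (J τ.1) + τ.2 (J σ.1))) :
    ∀ σ τ : V × Module.Dual ℝ V, ghat (Jhat σ) τ = ghat σ (Jhat τ) := by
  obtain rfl : Jhat = GeneralizedMetallic.lift g J p := funext hJhat
  obtain rfl : ghat = GeneralizedMetallic.metric g sharp J p q := funext₂ hghat
  exact GeneralizedMetallic.metric_lift hgsymm hflat_sharp hJsym hJ hpq

/-- On a finite-dimensional `V` with nondegenerate symmetric `g`
(with musical isomorphisms `♭_g = g ·` and its inverse `♯_g`), if `J` is
`g`-symmetric with `J² = p J + q I`, `p² + 4q ≠ 0`, then `Ĵ` is `ĝ`-symmetric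
for the generalized metric `ĝ`. -/
theorem generalized_metallic_pseudoRiemannian
    (V : Type*) [AddCommGroup V] [Module ℝ V] [FiniteDimensional ℝ V]
    (g : LinearMap.BilinForm ℝ V) (hgsymm : ∀ X Y : V, g X Y = g Y X)
    (hgnd : ∀ X : V, (∀ Y : V, g X Y = 0) → X = 0)
    (sharp : Module.Dual ℝ V →ₗ[ℝ] V)
    (hsharp_flat : ∀ X : V, sharp (g X) = X)
    (hflat_sharp : ∀ α : Module.Dual ℝ V, g (sharp α) = α)
    (J : Module.End ℝ V)
    (hJsym : ∀ X Y : V, g (J X) Y = g X (J Y))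
    (p q : ℝ) (hJ : J ^ 2 = p • J + q • (1 : Module.End ℝ V))
    (hpq : p ^ 2 + 4 * q ≠ 0)
    (Jhat : V × Module.Dual ℝ V → V × Module.Dual ℝ V)
    (hJhat : ∀ σ : V × Module.Dual ℝ V,
      Jhat σ = (J σ.1, g σ.1 - σ.2 ∘ₗ (J : V →ₗ[ℝ] V) + p • σ.2))
    (ghat : V × Module.Dual ℝ V → V × Module.Dual ℝ V → ℝ)
    (hghat : ∀ σ τ : V × Module.Dual ℝ V,
      ghat σ τ = g σ.1 τ.1 + g (sharp σ.2) (sharp τ.2) +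
        (p / (p ^ 2 + 4 * q)) * (σ.2 τ.1 + τ.2 σ.1) -
        (2 / (p ^ 2 + 4 * q)) * (σ.2 (J τ.1) + τ.2 (J σ.1))) :
    ∀ σ τ : V × Module.Dual ℝ V, ghat (Jhat σ) τ = ghat σ (Jhat τ) :=
  generalized_metallic_pseudoRiemannian_general V g hgsymm sharp hflat_sharp J hJsym p q hJ hpq Jhat
    hJhat ghat hghat
end

section
/- Let V be a finite-dimensional real vector space, g a nondegenerate symmetric bilinear form on V, and J : V → V an arbitrary g-symmetric linear map. For any real numbers p, q, define J̌ : V ⊕ V* → V ⊕ V* by J̌(X, α) := (J X + (−J² + p J + q I)(♯_g α), ♭_g(X) − J*(α) + p α). Then J̌² = p J̌ + q Id on V ⊕ V*. -/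
/-!
Write `A(T) = -T² + pT + q` and `♭ = e`, `♯ = e⁻¹`. The only input is that `e` intertwines `J` with
`K = J*` (this is the `g`-symmetry of `J`), so that `e` also intertwines `A(J)` with `A(K)` and `J`
commutes with `A(J)`. Squaring the block operator `[[J, A(J)♯], [♭, p - K]]`, the off-diagonal
blocks collapse to `p A(J)♯` and `p ♭`, while the diagonal ones become `J² + A(J) = pJ + q` and
`A(K) + (p - K)² = p(p - K) + q`.
-/

lemma LinearEquiv.symm_apply_of_intertwines {R V W : Type*} [Semiring R] [AddCommMonoid V]
    [Module R V] [AddCommMonoid W] [Module R W] {J : Module.End R V} {K : Module.End R W}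
    {e : V ≃ₗ[R] W} (he : ∀ X, e (J X) = K (e X)) (α : W) :
    e.symm (K α) = J (e.symm α) :=
  e.symm_apply_eq.mpr (by rw [he, e.apply_symm_apply])

namespace Module.End

variable {R V W : Type*} [CommRing R] [AddCommGroup V] [Module R V] [AddCommGroup W] [Module R W]

/-- Vanishes exactly when `T² = pT + q`, i.e. when `T` is a `(p, q)`-metallic structure. -/
def metallicDefect (p q : R) (T : Module.End R V) : Module.End R V :=
  -(T * T) + p • T + q • 1

variable {p q : R} {J : Module.End R V} {K : Module.End R W}

lemma metallicDefect_apply (X : V) :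
    metallicDefect p q J X = -J (J X) + p • J X + q • X := by
  simp [metallicDefect]

lemma apply_metallicDefect_apply (X : V) :
    J (metallicDefect p q J X) = metallicDefect p q J (J X) := by
  simp [metallicDefect_apply]

variable {e : V ≃ₗ[R] W}

lemma apply_metallicDefect_of_intertwines (he : ∀ X, e (J X) = K (e X)) (X : V) :
    e (metallicDefect p q J X) = metallicDefect p q K (e X) := by
  simp [metallicDefect_apply, he]

variable (p q J K e)

def metallicLift (σ : V × W) : V × W :=
  (J σ.1 + metallicDefect p q J (e.symm σ.2), e σ.1 - K σ.2 + p • σ.2)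

variable {p q J K e}

theorem metallicLift_metallicLift (he : ∀ X, e (J X) = K (e X)) (σ : V × W) :
    metallicLift p q J K e (metallicLift p q J K e σ) = p • metallicLift p q J K e σ + q • σ := by
  obtain ⟨X, α⟩ := σ
  ext
  · simp only [metallicLift, map_add, map_sub, map_smul, e.symm_apply_apply,
      LinearEquiv.symm_apply_of_intertwines he, apply_metallicDefect_apply, Prod.fst_add,
      Prod.smul_fst]
    rw [metallicDefect_apply X]
    module
  · simp only [metallicLift, map_add, map_sub, map_smul,
      apply_metallicDefect_of_intertwines he, e.apply_symm_apply, he,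
      Prod.snd_add, Prod.smul_snd]
    rw [metallicDefect_apply]
    module

end Module.End

open Module.End in
theorem generalized_metallic_from_arbitrary_J_general
    (V : Type*) [AddCommGroup V] [Module ℝ V]
    (g : LinearMap.BilinForm ℝ V)
    (sharp : Module.Dual ℝ V →ₗ[ℝ] V)
    (hsharp_flat : ∀ X : V, sharp (g X) = X)
    (hflat_sharp : ∀ α : Module.Dual ℝ V, g (sharp α) = α)
    (J : Module.End ℝ V)
    (hJsym : ∀ X Y : V, g (J X) Y = g X (J Y))
    (p q : ℝ)
    (Jcheck : V × Module.Dual ℝ V → V × Module.Dual ℝ V)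
    (hJcheck : ∀ σ : V × Module.Dual ℝ V,
      Jcheck σ = (J σ.1 + (-(J * J) + p • J + q • (1 : Module.End ℝ V)) (sharp σ.2),
        g σ.1 - σ.2 ∘ₗ (J : V →ₗ[ℝ] V) + p • σ.2)) :
    ∀ σ : V × Module.Dual ℝ V, Jcheck (Jcheck σ) = p • Jcheck σ + q • σ := by
  let flat : V ≃ₗ[ℝ] Module.Dual ℝ V :=
    .ofLinearMap g sharp (LinearMap.ext hflat_sharp) (LinearMap.ext hsharp_flat)
  have hflat : ∀ X, flat (J X) = J.dualMap (flat X) := fun X => LinearMap.ext (hJsym X)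
  have hJcheck_eq : Jcheck = metallicLift p q J J.dualMap flat := funext hJcheck
  intro σ
  rw [hJcheck_eq]
  exact metallicLift_metallicLift hflat σ

/-- For an arbitrary `g`-symmetric `J` on a finite-dimensional `V`
with nondegenerate symmetric `g`, and any reals `p q`, the map
`J̌(X, α) := (J X + (-J² + p J + q I)(♯_g α), ♭_g X - J* α + p α)`
satisfies `J̌² = p J̌ + q Id` on `V ⊕ V*`. -/
theorem generalized_metallic_from_arbitrary_J
    (V : Type*) [AddCommGroup V] [Module ℝ V] [FiniteDimensional ℝ V]
    (g : LinearMap.BilinForm ℝ V) (hgsymm : ∀ X Y : V, g X Y = g Y X)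
    (hgnd : ∀ X : V, (∀ Y : V, g X Y = 0) → X = 0)
    (sharp : Module.Dual ℝ V →ₗ[ℝ] V)
    (hsharp_flat : ∀ X : V, sharp (g X) = X)
    (hflat_sharp : ∀ α : Module.Dual ℝ V, g (sharp α) = α)
    (J : Module.End ℝ V)
    (hJsym : ∀ X Y : V, g (J X) Y = g X (J Y))
    (p q : ℝ)
    (Jcheck : V × Module.Dual ℝ V → V × Module.Dual ℝ V)
    (hJcheck : ∀ σ : V × Module.Dual ℝ V,
      Jcheck σ = (J σ.1 + (-(J * J) + p • J + q • (1 : Module.End ℝ V)) (sharp σ.2),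
        g σ.1 - σ.2 ∘ₗ (J : V →ₗ[ℝ] V) + p • σ.2)) :
    ∀ σ : V × Module.Dual ℝ V, Jcheck (Jcheck σ) = p • Jcheck σ + q • σ :=
  generalized_metallic_from_arbitrary_J_general V g sharp hsharp_flat hflat_sharp J hJsym p q Jcheck
    hJcheck
end

section
/- Let V be a finite-dimensional real vector space, g a nondegenerate symmetric bilinear form on V, and J : V → V an arbitrary g-symmetric linear map. For any real numbers p, q, define J̌ : V ⊕ V* → V ⊕ V* by J̌(X, α) := (J X + (−J² + p J + q I)(♯_g α), ♭_g(X) − J*(α) + p α), and define the symmetric bilinear form ǧ on V ⊕ V* by ǧ(X + α, Y + β) := g(X, Y) + ((p²+4q)/4) g(♯_g α, ♯_g β) + (p/4)(α(Y) + β(X)) − (1/2)(α(J Y) + β(J X)). Then J̌ is ǧ-symmetric: ǧ(J̌(X+α), Y+β) = ǧ(X+α, J̌(Y+β)) for all X, Y ∈ V and α, β ∈ V*. -/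
/-!
Transport `J̌` and `ǧ` along `(X, a) ↦ (X, ♭_g a)`, `V × V ≃ V ⊕ V*`. There `J̌` becomes the
polynomial matrix `M = [[t, -t² + p t + q], [1, p - t]]` evaluated at `t = J`, and `ǧ` becomes
`(σ, τ) ↦ ⟪σ, G τ⟫` with `⟪·, ·⟫ = g ⊕ g` and `G = [[1, p/4 - t/2], [p/4 - t/2, (p² + 4q)/4]]`.
Polynomials in `J` are `g`-self-adjoint, so `⟪M σ, ρ⟫ = ⟪σ, Mᵀ ρ⟫`, and the claim reduces to the
identity `Mᵀ G = G M` of polynomial matrices, i.e. to `G M` being symmetric: both of its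
off-diagonal entries equal `q + p²/4 + p t/4 - t²/2`.
-/

open Polynomial
open scoped Matrix

namespace LinearMap.IsAdjointPair

variable {R V : Type*} [CommRing R] [AddCommGroup V] [Module R V]
  {B : LinearMap.BilinForm R V} {J : Module.End R V}

theorem aeval (hJ : IsAdjointPair B B J J) (f : R[X]) :
    IsAdjointPair B B (Polynomial.aeval J f) (Polynomial.aeval J f) := by
  induction f using Polynomial.induction_on with
  | C a => simpa [Algebra.algebraMap_eq_smul_one] using (isAdjointPair_one (B := B)).smul a
  | add f f' hf hf' => rw [map_add]; exact hf.add hf'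
  | monomial n a ih =>
    have h : IsAdjointPair B B (Polynomial.aeval J (C a * X ^ n * X))
        (Polynomial.aeval J (X * (C a * X ^ n))) := by
      simpa only [map_mul, aeval_X] using ih.mul hJ
    rwa [mul_comm X, mul_assoc, ← pow_succ] at h

end LinearMap.IsAdjointPair

section BlockAeval

variable {R V : Type*} [CommRing R] [AddCommGroup V] [Module R V]

noncomputable def blockAeval (J : Module.End R V) (N : Matrix (Fin 2) (Fin 2) R[X])
    (σ : V × V) : V × V :=
  (aeval J (N 0 0) σ.1 + aeval J (N 0 1) σ.2, aeval J (N 1 0) σ.1 + aeval J (N 1 1) σ.2)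

theorem blockAeval_mul (J : Module.End R V) (N N' : Matrix (Fin 2) (Fin 2) R[X]) (σ : V × V) :
    blockAeval J (N * N') σ = blockAeval J N (blockAeval J N' σ) := by
  ext <;> simp only [blockAeval, Matrix.mul_apply, Fin.sum_univ_two, map_add, map_mul,
    LinearMap.add_apply, Module.End.mul_apply] <;> abel

def prodPairing (B : LinearMap.BilinForm R V) (σ τ : V × V) : R := B σ.1 τ.1 + B σ.2 τ.2

variable {B : LinearMap.BilinForm R V} {J : Module.End R V}

theorem prodPairing_blockAeval_left (hJ : B.IsAdjointPair B J J)
    (N : Matrix (Fin 2) (Fin 2) R[X]) (σ τ : V × V) :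
    prodPairing B (blockAeval J N σ) τ = prodPairing B σ (blockAeval J Nᵀ τ) := by
  simp only [prodPairing, blockAeval, Matrix.transpose_apply, map_add, LinearMap.add_apply,
    (hJ.aeval _) _ τ.1, (hJ.aeval _) _ τ.2]
  ring

theorem prodPairing_blockAeval_symm (hJ : B.IsAdjointPair B J J)
    {G M : Matrix (Fin 2) (Fin 2) R[X]} (hG : Gᵀ = G) (hGM : (G * M)ᵀ = G * M) (σ τ : V × V) :
    prodPairing B (blockAeval J M σ) (blockAeval J G τ) =
      prodPairing B σ (blockAeval J G (blockAeval J M τ)) := by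
  rw [prodPairing_blockAeval_left hJ, ← blockAeval_mul, ← blockAeval_mul, ← hG,
    ← Matrix.transpose_mul, hG, hGM]

end BlockAeval

section Metallic

noncomputable def metallicMatrix (p q : ℝ) : Matrix (Fin 2) (Fin 2) ℝ[X] :=
  !![X, -X ^ 2 + C p * X + C q; 1, C p - X]

noncomputable def metallicGram (p q : ℝ) : Matrix (Fin 2) (Fin 2) ℝ[X] :=
  !![1, C (p / 4) - C (1 / 2) * X; C (p / 4) - C (1 / 2) * X, C ((p ^ 2 + 4 * q) / 4)]

theorem metallicGram_transpose (p q : ℝ) : (metallicGram p q)ᵀ = metallicGram p q := by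
  ext i j : 1
  fin_cases i <;> fin_cases j <;> rfl

theorem metallicGram_mul_metallicMatrix_transpose (p q : ℝ) :
    (metallicGram p q * metallicMatrix p q)ᵀ = metallicGram p q * metallicMatrix p q := by
  ext i j : 1
  fin_cases i <;> fin_cases j <;> refine Polynomial.funext fun t => ?_ <;>
    simp [metallicGram, metallicMatrix, Matrix.mul_apply, Fin.sum_univ_two] <;> ring

variable {V : Type*} [AddCommGroup V] [Module ℝ V] (J : Module.End ℝ V) (p q : ℝ)

theorem blockAeval_metallicMatrix (x a : V) :
    blockAeval J (metallicMatrix p q) (x, a) =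
      (J x + (-(J * J) + p • J + q • 1) a, x + p • a - J a) := by
  simp [blockAeval, metallicMatrix, sq, Algebra.algebraMap_eq_smul_one, add_sub_assoc]

theorem prodPairing_blockAeval_metallicGram (g : LinearMap.BilinForm ℝ V) (x a y b : V) :
    prodPairing g (x, a) (blockAeval J (metallicGram p q) (y, b)) =
      g x y + ((p ^ 2 + 4 * q) / 4) * g a b + (p / 4) * (g a y + g x b) -
        (1 / 2) * (g a (J y) + g x (J b)) := by
  simp [prodPairing, blockAeval, metallicGram, Algebra.algebraMap_eq_smul_one]
  ring

end Metallic

theorem generalized_metallic_check_symmetric_general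
    (V : Type*) [AddCommGroup V] [Module ℝ V]
    (g : LinearMap.BilinForm ℝ V) (hgsymm : ∀ X Y : V, g X Y = g Y X)
    (sharp : Module.Dual ℝ V →ₗ[ℝ] V)
    (hsharp_flat : ∀ X : V, sharp (g X) = X)
    (hflat_sharp : ∀ α : Module.Dual ℝ V, g (sharp α) = α)
    (J : Module.End ℝ V)
    (hJsym : ∀ X Y : V, g (J X) Y = g X (J Y))
    (p q : ℝ)
    (Jcheck : V × Module.Dual ℝ V → V × Module.Dual ℝ V)
    (hJcheck : ∀ σ : V × Module.Dual ℝ V,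
      Jcheck σ = (J σ.1 + (-(J * J) + p • J + q • (1 : Module.End ℝ V)) (sharp σ.2),
        g σ.1 - σ.2 ∘ₗ (J : V →ₗ[ℝ] V) + p • σ.2))
    (gcheck : V × Module.Dual ℝ V → V × Module.Dual ℝ V → ℝ)
    (hgcheck : ∀ σ τ : V × Module.Dual ℝ V,
      gcheck σ τ = g σ.1 τ.1 + ((p ^ 2 + 4 * q) / 4) * g (sharp σ.2) (sharp τ.2) +
        (p / 4) * (σ.2 τ.1 + τ.2 σ.1) - (1 / 2) * (σ.2 (J τ.1) + τ.2 (J σ.1))) :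
    ∀ σ τ : V × Module.Dual ℝ V, gcheck (Jcheck σ) τ = gcheck σ (Jcheck τ) := by
  let flat : V × V → V × Module.Dual ℝ V := fun σ => (σ.1, g σ.2)
  have flat_sharp : ∀ σ : V × Module.Dual ℝ V, flat (σ.1, sharp σ.2) = σ :=
    fun σ => Prod.ext rfl (hflat_sharp σ.2)
  have hJcheck_flat : ∀ σ, Jcheck (flat σ) = flat (blockAeval J (metallicMatrix p q) σ) := by
    rintro ⟨x, a⟩
    rw [hJcheck, blockAeval_metallicMatrix]
    ext y
    · simp [flat, hsharp_flat]
    · simp only [flat, LinearMap.add_apply, LinearMap.sub_apply, LinearMap.comp_apply,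
        LinearMap.smul_apply, smul_eq_mul, map_add, map_sub, map_smul, hJsym]
      ring
  have hgcheck_flat : ∀ σ τ,
      gcheck (flat σ) (flat τ) = prodPairing g σ (blockAeval J (metallicGram p q) τ) := by
    rintro ⟨x, a⟩ ⟨y, b⟩
    rw [hgcheck, prodPairing_blockAeval_metallicGram, hsharp_flat, hsharp_flat, hgsymm b x,
      ← hJsym b x, hgsymm (J b) x]
  intro σ τ
  rw [← flat_sharp σ, ← flat_sharp τ, hJcheck_flat, hJcheck_flat, hgcheck_flat, hgcheck_flat]
  exact prodPairing_blockAeval_symm hJsym (metallicGram_transpose p q)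
    (metallicGram_mul_metallicMatrix_transpose p q) _ _

/-- For an arbitrary `g`-symmetric `J` on a finite-dimensional `V`
with nondegenerate symmetric `g`, and any reals `p q`, the generalized metallic
structure `J̌` is symmetric with respect to the generalized metric `ǧ`. -/
theorem generalized_metallic_check_symmetric
    (V : Type*) [AddCommGroup V] [Module ℝ V] [FiniteDimensional ℝ V]
    (g : LinearMap.BilinForm ℝ V) (hgsymm : ∀ X Y : V, g X Y = g Y X)
    (hgnd : ∀ X : V, (∀ Y : V, g X Y = 0) → X = 0)
    (sharp : Module.Dual ℝ V →ₗ[ℝ] V)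
    (hsharp_flat : ∀ X : V, sharp (g X) = X)
    (hflat_sharp : ∀ α : Module.Dual ℝ V, g (sharp α) = α)
    (J : Module.End ℝ V)
    (hJsym : ∀ X Y : V, g (J X) Y = g X (J Y))
    (p q : ℝ)
    (Jcheck : V × Module.Dual ℝ V → V × Module.Dual ℝ V)
    (hJcheck : ∀ σ : V × Module.Dual ℝ V,
      Jcheck σ = (J σ.1 + (-(J * J) + p • J + q • (1 : Module.End ℝ V)) (sharp σ.2),
        g σ.1 - σ.2 ∘ₗ (J : V →ₗ[ℝ] V) + p • σ.2))
    (gcheck : V × Module.Dual ℝ V → V × Module.Dual ℝ V → ℝ)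
    (hgcheck : ∀ σ τ : V × Module.Dual ℝ V,
      gcheck σ τ = g σ.1 τ.1 + ((p ^ 2 + 4 * q) / 4) * g (sharp σ.2) (sharp τ.2) +
        (p / 4) * (σ.2 τ.1 + τ.2 σ.1) - (1 / 2) * (σ.2 (J τ.1) + τ.2 (J σ.1))) :
    ∀ σ τ : V × Module.Dual ℝ V, gcheck (Jcheck σ) τ = gcheck σ (Jcheck τ) :=
  generalized_metallic_check_symmetric_general V g hgsymm sharp hsharp_flat hflat_sharp J hJsym p q
    Jcheck hJcheck gcheck hgcheck
end

section
/- Let V be a finite-dimensional real vector space, g a nondegenerate symmetric bilinear form on V, and J : V → V an arbitrary g-symmetric linear map. For any real numbers p, q, define J̌ : V ⊕ V* → V ⊕ V* by J̌(X, α) := (J X + (−J² + p J + q I)(♯_g α), ♭_g(X) − J*(α) + p α), and let (·,·) be the natural symplectic pairing on V ⊕ V* given by (X + α, Y + β) := −(1/2)(α(Y) − β(X)). Then (J̌(X+α), Y+β) + (X+α, J̌(Y+β)) = p · (X+α, Y+β) for all X, Y ∈ V and α, β ∈ V*. In particular, for p = 0 the map J̌ is anti-calibrated with respect to (·,·). 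-/
/-!
Writing `P = -J² + pJ + q` for the endomorphism in the first component of `J̌`, the two
`J`-terms of `(J̌ σ, τ)` cancel against those of `(σ, J̌ τ)` whatever `J` is, the `♭_g`-terms
cancel because `g` is symmetric, and the `P ∘ ♯_g`-terms cancel because `P` is `g`-self-adjoint
(being a polynomial in the `g`-self-adjoint `J`). Only the `p α` and `p β` terms survive.
-/

open LinearMap

section

variable {V : Type*} [AddCommGroup V] [Module ℝ V]

noncomputable def symplecticPairing (σ τ : V × Module.Dual ℝ V) : ℝ :=
  -(1 / 2) * (σ.2 τ.1 - τ.2 σ.1)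

/-- For `A = J` and `T = -J² + pJ + q` this is the generalized metallic structure `J̌`. -/
def metallicLift (g : LinearMap.BilinForm ℝ V) (sharp : Module.Dual ℝ V →ₗ[ℝ] V)
    (A T : Module.End ℝ V) (p : ℝ) (σ : V × Module.Dual ℝ V) : V × Module.Dual ℝ V :=
  (A σ.1 + T (sharp σ.2), g σ.1 - σ.2 ∘ₗ A + p • σ.2)

theorem isAdjointPair_metallicPolynomial {g : LinearMap.BilinForm ℝ V} {J : Module.End ℝ V}
    (hJ : IsAdjointPair g g J J) (p q : ℝ) :
    IsAdjointPair g g (-(J * J) + p • J + q • 1 : Module.End ℝ V)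
      (-(J * J) + p • J + q • 1 : Module.End ℝ V) := by
  have hJJ : IsAdjointPair g g (-(J * J) : Module.End ℝ V) (-(J * J) : Module.End ℝ V) := by
    simpa using isAdjointPair_zero.sub (hJ.mul hJ)
  exact (hJJ.add (hJ.smul p)).add (isAdjointPair_one.smul q)

theorem apply_sharp_comm_of_isAdjointPair {g : LinearMap.BilinForm ℝ V}
    (hg : ∀ X Y : V, g X Y = g Y X) {sharp : Module.Dual ℝ V →ₗ[ℝ] V}
    (hsharp : ∀ α : Module.Dual ℝ V, g (sharp α) = α) {T : Module.End ℝ V}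
    (hT : IsAdjointPair g g T T) (α β : Module.Dual ℝ V) :
    β (T (sharp α)) = α (T (sharp β)) :=
  calc β (T (sharp α)) = g (sharp β) (T (sharp α)) := by rw [hsharp]
    _ = g (T (sharp α)) (sharp β) := hg _ _
    _ = g (sharp α) (T (sharp β)) := hT _ _
    _ = α (T (sharp β)) := by rw [hsharp]

theorem symplecticPairing_metallicLift_add {g : LinearMap.BilinForm ℝ V}
    (hg : ∀ X Y : V, g X Y = g Y X) {sharp : Module.Dual ℝ V →ₗ[ℝ] V}
    (hsharp : ∀ α : Module.Dual ℝ V, g (sharp α) = α) (A : Module.End ℝ V)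
    {T : Module.End ℝ V} (hT : IsAdjointPair g g T T) (p : ℝ) (σ τ : V × Module.Dual ℝ V) :
    symplecticPairing (metallicLift g sharp A T p σ) τ +
        symplecticPairing σ (metallicLift g sharp A T p τ) =
      p * symplecticPairing σ τ := by
  obtain ⟨X, α⟩ := σ
  obtain ⟨Y, β⟩ := τ
  simp only [symplecticPairing, metallicLift, map_add, LinearMap.add_apply, LinearMap.sub_apply,
    LinearMap.smul_apply, LinearMap.comp_apply, smul_eq_mul]
  rw [hg X Y, apply_sharp_comm_of_isAdjointPair hg hsharp hT α β]
  ring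

end

theorem generalized_metallic_anticalibrated_general
    (V : Type*) [AddCommGroup V] [Module ℝ V]
    (g : LinearMap.BilinForm ℝ V) (hgsymm : ∀ X Y : V, g X Y = g Y X)
    (sharp : Module.Dual ℝ V →ₗ[ℝ] V)
    (hflat_sharp : ∀ α : Module.Dual ℝ V, g (sharp α) = α)
    (J : Module.End ℝ V)
    (hJsym : ∀ X Y : V, g (J X) Y = g X (J Y))
    (p q : ℝ)
    (Jcheck : V × Module.Dual ℝ V → V × Module.Dual ℝ V)
    (hJcheck : ∀ σ : V × Module.Dual ℝ V,
      Jcheck σ = (J σ.1 + (-(J * J) + p • J + q • (1 : Module.End ℝ V)) (sharp σ.2),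
        g σ.1 - σ.2 ∘ₗ (J : V →ₗ[ℝ] V) + p • σ.2))
    (ω : V × Module.Dual ℝ V → V × Module.Dual ℝ V → ℝ)
    (hω : ∀ σ τ : V × Module.Dual ℝ V,
      ω σ τ = -(1 / 2) * (σ.2 τ.1 - τ.2 σ.1)) :
    (∀ σ τ : V × Module.Dual ℝ V,
      ω (Jcheck σ) τ + ω σ (Jcheck τ) = p * ω σ τ) ∧
    (p = 0 → ∀ σ τ : V × Module.Dual ℝ V,
      ω (Jcheck σ) τ + ω σ (Jcheck τ) = 0) := by
  obtain rfl : ω = symplecticPairing := funext fun σ ↦ funext (hω σ)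
  obtain rfl : Jcheck = metallicLift g sharp J (-(J * J) + p • J + q • 1) p := funext hJcheck
  have key := symplecticPairing_metallicLift_add hgsymm hflat_sharp J
    (isAdjointPair_metallicPolynomial hJsym p q) p
  exact ⟨key, fun hp σ τ ↦ by rw [key, hp, zero_mul]⟩

/-- For an arbitrary `g`-symmetric `J` on a finite-dimensional `V`
with nondegenerate symmetric `g`, and any reals `p q`, the generalized metallic
structure `J̌` satisfies `(J̌ σ, τ) + (σ, J̌ τ) = p (σ, τ)` for the natural
symplectic pairing `(X + α, Y + β) = -(1/2)(α Y - β X)`; in particular for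
`p = 0` the map `J̌` is anti-calibrated. -/
theorem generalized_metallic_anticalibrated
    (V : Type*) [AddCommGroup V] [Module ℝ V] [FiniteDimensional ℝ V]
    (g : LinearMap.BilinForm ℝ V) (hgsymm : ∀ X Y : V, g X Y = g Y X)
    (hgnd : ∀ X : V, (∀ Y : V, g X Y = 0) → X = 0)
    (sharp : Module.Dual ℝ V →ₗ[ℝ] V)
    (hsharp_flat : ∀ X : V, sharp (g X) = X)
    (hflat_sharp : ∀ α : Module.Dual ℝ V, g (sharp α) = α)
    (J : Module.End ℝ V)
    (hJsym : ∀ X Y : V, g (J X) Y = g X (J Y))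
    (p q : ℝ)
    (Jcheck : V × Module.Dual ℝ V → V × Module.Dual ℝ V)
    (hJcheck : ∀ σ : V × Module.Dual ℝ V,
      Jcheck σ = (J σ.1 + (-(J * J) + p • J + q • (1 : Module.End ℝ V)) (sharp σ.2),
        g σ.1 - σ.2 ∘ₗ (J : V →ₗ[ℝ] V) + p • σ.2))
    (ω : V × Module.Dual ℝ V → V × Module.Dual ℝ V → ℝ)
    (hω : ∀ σ τ : V × Module.Dual ℝ V,
      ω σ τ = -(1 / 2) * (σ.2 τ.1 - τ.2 σ.1)) :
    (∀ σ τ : V × Module.Dual ℝ V,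
      ω (Jcheck σ) τ + ω σ (Jcheck τ) = p * ω σ τ) ∧
    (p = 0 → ∀ σ τ : V × Module.Dual ℝ V,
      ω (Jcheck σ) τ + ω σ (Jcheck τ) = 0) :=
  generalized_metallic_anticalibrated_general V g hgsymm sharp hflat_sharp J hJsym p q Jcheck
    hJcheck ω hω
end

section
/- Let V be a finite-dimensional real vector space, g a nondegenerate symmetric bilinear form on V, and J : V → V an arbitrary g-symmetric linear map. For any real numbers p, q, define J̌' : V ⊕ V* → V ⊕ V* by J̌'(X, α) := (−J X + p X + (−J² + p J + q I)(♯_g α), ♭_g(X) + J*(α)). Then J̌'² = p J̌' + q Id on V ⊕ V*. Moreover, if J itself satisfies J² = p J + q I, then J̌'(X, α) = (−J X + p X, ♭_g(X) + J*(α)). -/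
/-!
Transporting `V ⊕ V*` to `V ⊕ V` by `(X, α) ↦ (X, ♯α)` conjugates `J̌'` to the block operator
`[[p - J, B], [1, J]]` with `B = -J² + pJ + q`, because `g`-symmetry of `J` gives `♯(J* α) = J ♯α`.
Since `B` commutes with `J` and `B + J² = pJ + q`, squaring the block operator gives
`[[p(p - J) + q, pB], [p, pJ + q]] = p [[p - J, B], [1, J]] + q`.
-/

section

variable {R M : Type*} [CommRing R] [AddCommGroup M] [Module R M]

def metallicBlock (J : Module.End R M) (p q : R) (v : M × M) : M × M :=
  (p • v.1 - J v.1 + (-(J * J) + p • J + q • (1 : Module.End R M)) v.2, v.1 + J v.2)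

theorem metallicBlock_metallicBlock (J : Module.End R M) (p q : R) (v : M × M) :
    metallicBlock J p q (metallicBlock J p q v) = p • metallicBlock J p q v + q • v := by
  obtain ⟨X, Y⟩ := v
  simp only [metallicBlock, Prod.smul_mk, Prod.mk_add_mk, Prod.mk.injEq, map_add, map_sub,
    map_smul, map_neg, LinearMap.add_apply, LinearMap.neg_apply, LinearMap.smul_apply,
    Module.End.mul_apply, Module.End.one_apply]
  constructor <;> module

theorem sharp_comp_eq_of_isSymm {g : LinearMap.BilinForm R M}
    {sharp : Module.Dual R M →ₗ[R] M} (hsharp_flat : ∀ X : M, sharp (g X) = X)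
    (hflat_sharp : ∀ α : Module.Dual R M, g (sharp α) = α)
    {J : Module.End R M} (hJsym : ∀ X Y : M, g (J X) Y = g X (J Y)) (α : Module.Dual R M) :
    sharp (α ∘ₗ J) = J (sharp α) := by
  have hflat : α ∘ₗ J = g (J (sharp α)) := by
    ext Y
    rw [LinearMap.comp_apply, hJsym, hflat_sharp]
  rw [hflat, hsharp_flat]

end

theorem generalized_metallic_check_prime_general
    (V : Type*) [AddCommGroup V] [Module ℝ V]
    (g : LinearMap.BilinForm ℝ V)
    (sharp : Module.Dual ℝ V →ₗ[ℝ] V)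
    (hsharp_flat : ∀ X : V, sharp (g X) = X)
    (hflat_sharp : ∀ α : Module.Dual ℝ V, g (sharp α) = α)
    (J : Module.End ℝ V)
    (hJsym : ∀ X Y : V, g (J X) Y = g X (J Y))
    (p q : ℝ)
    (Jcheck' : V × Module.Dual ℝ V → V × Module.Dual ℝ V)
    (hJcheck' : ∀ σ : V × Module.Dual ℝ V,
      Jcheck' σ = (-(J σ.1) + p • σ.1 +
          (-(J * J) + p • J + q • (1 : Module.End ℝ V)) (sharp σ.2),
        g σ.1 + σ.2 ∘ₗ (J : V →ₗ[ℝ] V))) :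
    (∀ σ : V × Module.Dual ℝ V, Jcheck' (Jcheck' σ) = p • Jcheck' σ + q • σ) ∧
    (J ^ 2 = p • J + q • (1 : Module.End ℝ V) →
      ∀ σ : V × Module.Dual ℝ V,
        Jcheck' σ = (-(J σ.1) + p • σ.1, g σ.1 + σ.2 ∘ₗ (J : V →ₗ[ℝ] V))) := by
  let Φ : V × Module.Dual ℝ V →ₗ[ℝ] V × V := LinearMap.prodMap LinearMap.id sharp
  have hΦ_inj : Function.Injective Φ :=
    Prod.map_injective.mpr ⟨Function.injective_id,
      Function.LeftInverse.injective (g := g) hflat_sharp⟩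
  have hΦ_conj : ∀ σ, Φ (Jcheck' σ) = metallicBlock J p q (Φ σ) := by
    intro σ
    simp only [Φ, hJcheck', metallicBlock, LinearMap.prodMap_apply, LinearMap.id_apply, map_add,
      hsharp_flat, sharp_comp_eq_of_isSymm hsharp_flat hflat_sharp hJsym, Prod.mk.injEq, and_true]
    abel
  refine ⟨fun σ => hΦ_inj ?_, fun hJ σ => ?_⟩
  · rw [map_add, map_smul, map_smul, hΦ_conj, hΦ_conj, metallicBlock_metallicBlock]
  · have hB : -(J * J) + p • J + q • (1 : Module.End ℝ V) = 0 := by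
      rw [← sq, hJ]
      abel
    rw [hJcheck', hB, LinearMap.zero_apply, add_zero]

/-- For an arbitrary `g`-symmetric `J` on a finite-dimensional `V`
with nondegenerate symmetric `g`, and any reals `p q`, the map
`J̌'(X, α) := (-J X + p X + (-J² + p J + q I)(♯_g α), ♭_g X + J* α)`
satisfies `J̌'² = p J̌' + q Id`; and if `J² = p J + q I` then
`J̌'(X, α) = (-J X + p X, ♭_g X + J* α)`. -/
theorem generalized_metallic_check_prime
    (V : Type*) [AddCommGroup V] [Module ℝ V] [FiniteDimensional ℝ V]
    (g : LinearMap.BilinForm ℝ V) (hgsymm : ∀ X Y : V, g X Y = g Y X)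
    (hgnd : ∀ X : V, (∀ Y : V, g X Y = 0) → X = 0)
    (sharp : Module.Dual ℝ V →ₗ[ℝ] V)
    (hsharp_flat : ∀ X : V, sharp (g X) = X)
    (hflat_sharp : ∀ α : Module.Dual ℝ V, g (sharp α) = α)
    (J : Module.End ℝ V)
    (hJsym : ∀ X Y : V, g (J X) Y = g X (J Y))
    (p q : ℝ)
    (Jcheck' : V × Module.Dual ℝ V → V × Module.Dual ℝ V)
    (hJcheck' : ∀ σ : V × Module.Dual ℝ V,
      Jcheck' σ = (-(J σ.1) + p • σ.1 +
          (-(J * J) + p • J + q • (1 : Module.End ℝ V)) (sharp σ.2),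
        g σ.1 + σ.2 ∘ₗ (J : V →ₗ[ℝ] V))) :
    (∀ σ : V × Module.Dual ℝ V, Jcheck' (Jcheck' σ) = p • Jcheck' σ + q • σ) ∧
    (J ^ 2 = p • J + q • (1 : Module.End ℝ V) →
      ∀ σ : V × Module.Dual ℝ V,
        Jcheck' σ = (-(J σ.1) + p • σ.1, g σ.1 + σ.2 ∘ₗ (J : V →ₗ[ℝ] V))) :=
  generalized_metallic_check_prime_general V g sharp hsharp_flat hflat_sharp J hJsym p q Jcheck'
    hJcheck'
end

section
/- Let V be a finite-dimensional real vector space, g a nondegenerate symmetric bilinear form on V, and J : V → V an arbitrary g-symmetric linear map. Let p, q be real numbers with p² + 4q < 0. Define J̌ : V ⊕ V* → V ⊕ V* by J̌(X, α) := (J X + (−J² + p J + q I)(♯_g α), ♭_g(X) − J*(α) + p α), and the symmetric bilinear form ǧ(X + α, Y + β) := g(X, Y) + ((p²+4q)/4) g(♯_g α, ♯_g β) + (p/4)(α(Y) + β(X)) − (1/2)(α(J Y) + β(J X)). Then J̌_± := ±((2/√(−p²−4q)) J̌ − (p/√(−p²−4q)) Id) satisfy J̌_±² = −Id and are ǧ-symmetric: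 ǧ(J̌_± σ, τ) = ǧ(σ, J̌_± τ) for all σ, τ ∈ V ⊕ V*; i.e. J̌_± are generalized Norden structures with respect to ǧ. -/
/-!
Writing a covector as `♭A`, the map `J̌` becomes the block operator `[[J, P], [1, p - J]]` with
`P = -J² + pJ + q` on `V × V`. Its entries commute, its trace is `p` and its determinant is `-q`,
so by Cayley–Hamilton `J̌² = p J̌ + q`. Since `p² + 4q < 0`, any `T` with `T² = pT + q`
rescales to `(2T - p)/√(-p² - 4q)`, whose square is `-1`. A direct expansion shows that `J̌` is
`ǧ`-self-adjoint, and self-adjoint endomorphisms form a linear subspace containing `1`.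
-/

open LinearMap (BilinForm)

noncomputable section

def complexStructureOf {A : Type*} [Ring A] [Algebra ℝ A] (p q : ℝ) (T : A) : A :=
  (2 / √(-(p ^ 2) - 4 * q)) • T - (p / √(-(p ^ 2) - 4 * q)) • 1

theorem complexStructureOf_mul_self {A : Type*} [Ring A] [Algebra ℝ A] {p q : ℝ}
    (hpq : p ^ 2 + 4 * q < 0) {T : A} (hT : T * T = p • T + q • 1) :
    complexStructureOf p q T * complexStructureOf p q T = -1 := by
  have hs : √(-(p ^ 2) - 4 * q) ^ 2 = -(p ^ 2) - 4 * q := Real.sq_sqrt (by linarith)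
  have hs0 : √(-(p ^ 2) - 4 * q) ≠ 0 := (Real.sqrt_pos.2 (by linarith)).ne'
  simp only [complexStructureOf, sub_mul, mul_sub, smul_mul_smul_comm, hT, one_mul, mul_one,
    smul_add, smul_smul]
  match_scalars
  · field_simp
    ring
  · field_simp
    linear_combination hs

theorem LinearMap.IsSelfAdjoint.complexStructureOf {M : Type*} [AddCommGroup M] [Module ℝ M]
    {B : BilinForm ℝ M} {T : Module.End ℝ M} (hT : B.IsSelfAdjoint T) (p q : ℝ) :
    B.IsSelfAdjoint ⇑(_root_.complexStructureOf p q T : Module.End ℝ M) :=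
  B.selfAdjointSubmodule.sub_mem (Submodule.smul_mem _ _ hT)
    (Submodule.smul_mem _ _ LinearMap.isAdjointPair_one)

section

variable {V : Type*} [AddCommGroup V] [Module ℝ V]
  (g : BilinForm ℝ V) (sharp : Module.Dual ℝ V →ₗ[ℝ] V) (J : Module.End ℝ V) (p q : ℝ)

def jCheck : Module.End ℝ (V × Module.Dual ℝ V) :=
  (J.coprod ((-(J * J) + p • J + q • 1) ∘ₗ sharp)).prod (g.coprod (p • 1 - J.dualMap))

theorem jCheck_apply (σ : V × Module.Dual ℝ V) :
    jCheck g sharp J p q σ = (J σ.1 + (-(J * J) + p • J + q • (1 : Module.End ℝ V)) (sharp σ.2),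
      g σ.1 - σ.2 ∘ₗ (J : V →ₗ[ℝ] V) + p • σ.2) := by
  ext <;>
    simp only [jCheck, LinearMap.prod_apply, Function.prod_apply, LinearMap.coprod_apply,
      LinearMap.coe_comp, Function.comp_apply, LinearMap.add_apply, LinearMap.sub_apply,
      LinearMap.smul_apply, LinearMap.dualMap_apply, Module.End.one_apply, smul_eq_mul]
  abel

def gCheck : BilinForm ℝ (V × Module.Dual ℝ V) :=
  LinearMap.mk₂ ℝ (fun σ τ => g σ.1 τ.1 + ((p ^ 2 + 4 * q) / 4) * g (sharp σ.2) (sharp τ.2) +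
      (p / 4) * (σ.2 τ.1 + τ.2 σ.1) - (1 / 2) * (σ.2 (J τ.1) + τ.2 (J σ.1)))
    (fun _ _ _ => by simp only [Prod.fst_add, Prod.snd_add, map_add, LinearMap.add_apply]; ring)
    (fun _ _ _ => by
      simp only [Prod.smul_fst, Prod.smul_snd, map_smul, LinearMap.smul_apply, smul_eq_mul]; ring)
    (fun _ _ _ => by simp only [Prod.fst_add, Prod.snd_add, map_add, LinearMap.add_apply]; ring)
    (fun _ _ _ => by
      simp only [Prod.smul_fst, Prod.smul_snd, map_smul, LinearMap.smul_apply, smul_eq_mul]; ring)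

variable {g sharp J}

theorem flat_comp_eq_flat_apply (hJsym : ∀ X Y : V, g (J X) Y = g X (J Y)) (A : V) :
    g A ∘ₗ J = g (J A) :=
  LinearMap.ext fun Y => (hJsym A Y).symm

theorem jCheck_apply_flat (hsharp_flat : ∀ X : V, sharp (g X) = X)
    (hJsym : ∀ X Y : V, g (J X) Y = g X (J Y)) (X A : V) :
    jCheck g sharp J p q (X, g A) =
      (J X + (-(J * J) + p • J + q • 1) A, g (X - J A + p • A)) := by
  rw [jCheck_apply, hsharp_flat, flat_comp_eq_flat_apply hJsym, map_add, map_sub, map_smul]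

theorem jCheck_mul_self (hsharp_flat : ∀ X : V, sharp (g X) = X)
    (hflat_sharp : ∀ α : Module.Dual ℝ V, g (sharp α) = α)
    (hJsym : ∀ X Y : V, g (J X) Y = g X (J Y)) :
    jCheck g sharp J p q * jCheck g sharp J p q = p • jCheck g sharp J p q + q • 1 := by
  refine LinearMap.ext fun ⟨X, α⟩ => ?_
  obtain ⟨A, rfl⟩ : ∃ A, g A = α := ⟨sharp α, hflat_sharp α⟩
  simp only [Module.End.mul_apply, LinearMap.add_apply, LinearMap.smul_apply, Module.End.one_apply,
    jCheck_apply_flat p q hsharp_flat hJsym, Prod.smul_mk, Prod.mk_add_mk, ← map_smul, ← map_add]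
  refine Prod.ext ?_ (congrArg g ?_) <;>
    simp only [map_add, map_sub, map_smul, map_neg, LinearMap.neg_apply, Module.End.mul_apply] <;>
    module

theorem gCheck_apply_flat (hsharp_flat : ∀ X : V, sharp (g X) = X) (X A Y B : V) :
    gCheck g sharp J p q (X, g A) (Y, g B) = g X Y + ((p ^ 2 + 4 * q) / 4) * g A B +
      (p / 4) * (g A Y + g B X) - (1 / 2) * (g A (J Y) + g B (J X)) := by
  simp only [gCheck, LinearMap.mk₂_apply, hsharp_flat]

theorem isSelfAdjoint_gCheck_jCheck (hgsymm : ∀ X Y : V, g X Y = g Y X)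
    (hsharp_flat : ∀ X : V, sharp (g X) = X)
    (hflat_sharp : ∀ α : Module.Dual ℝ V, g (sharp α) = α)
    (hJsym : ∀ X Y : V, g (J X) Y = g X (J Y)) :
    (gCheck g sharp J p q).IsSelfAdjoint (jCheck g sharp J p q) := by
  rintro ⟨X, α⟩ ⟨Y, β⟩
  obtain ⟨A, rfl⟩ : ∃ A, g A = α := ⟨sharp α, hflat_sharp α⟩
  obtain ⟨B, rfl⟩ : ∃ B, g B = β := ⟨sharp β, hflat_sharp β⟩
  have swap₁ : ∀ u v, g u (J v) = g v (J u) := fun u v => by rw [← hJsym, hgsymm]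
  have swap₂ : ∀ u v, g u (J (J v)) = g v (J (J u)) := fun u v => by rw [← hJsym, swap₁]
  have swap₃ : ∀ u v, g u (J (J (J v))) = g v (J (J (J u))) := fun u v => by rw [← hJsym, swap₂]
  simp only [jCheck_apply_flat p q hsharp_flat hJsym, gCheck_apply_flat p q hsharp_flat]
  simp only [map_add, map_sub, map_smul, map_neg, LinearMap.add_apply, LinearMap.sub_apply,
    LinearMap.neg_apply, LinearMap.smul_apply, Module.End.mul_apply, Module.End.one_apply,
    smul_eq_mul, hJsym]
  -- `simp` uses these permutation lemmas as ordered rewrites, orienting every pairing canonically.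
  simp only [hgsymm, swap₁, swap₂, swap₃]
  ring

end

end

theorem generalized_norden_structures_general
    (V : Type*) [AddCommGroup V] [Module ℝ V]
    (g : LinearMap.BilinForm ℝ V) (hgsymm : ∀ X Y : V, g X Y = g Y X)
    (sharp : Module.Dual ℝ V →ₗ[ℝ] V)
    (hsharp_flat : ∀ X : V, sharp (g X) = X)
    (hflat_sharp : ∀ α : Module.Dual ℝ V, g (sharp α) = α)
    (J : Module.End ℝ V)
    (hJsym : ∀ X Y : V, g (J X) Y = g X (J Y))
    (p q : ℝ) (hpq : p ^ 2 + 4 * q < 0)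
    (Jcheck : V × Module.Dual ℝ V → V × Module.Dual ℝ V)
    (hJcheck : ∀ σ : V × Module.Dual ℝ V,
      Jcheck σ = (J σ.1 + (-(J * J) + p • J + q • (1 : Module.End ℝ V)) (sharp σ.2),
        g σ.1 - σ.2 ∘ₗ (J : V →ₗ[ℝ] V) + p • σ.2))
    (gcheck : V × Module.Dual ℝ V → V × Module.Dual ℝ V → ℝ)
    (hgcheck : ∀ σ τ : V × Module.Dual ℝ V,
      gcheck σ τ = g σ.1 τ.1 + ((p ^ 2 + 4 * q) / 4) * g (sharp σ.2) (sharp τ.2) +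
        (p / 4) * (σ.2 τ.1 + τ.2 σ.1) - (1 / 2) * (σ.2 (J τ.1) + τ.2 (J σ.1)))
    (Jcp Jcm : V × Module.Dual ℝ V → V × Module.Dual ℝ V)
    (hJcp : ∀ σ : V × Module.Dual ℝ V,
      Jcp σ = (2 / Real.sqrt (-(p ^ 2) - 4 * q)) • Jcheck σ -
        (p / Real.sqrt (-(p ^ 2) - 4 * q)) • σ)
    (hJcm : ∀ σ : V × Module.Dual ℝ V,
      Jcm σ = -((2 / Real.sqrt (-(p ^ 2) - 4 * q)) • Jcheck σ -
        (p / Real.sqrt (-(p ^ 2) - 4 * q)) • σ)) :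
    (∀ σ : V × Module.Dual ℝ V, Jcp (Jcp σ) = -σ) ∧
    (∀ σ : V × Module.Dual ℝ V, Jcm (Jcm σ) = -σ) ∧
    (∀ σ τ : V × Module.Dual ℝ V, gcheck (Jcp σ) τ = gcheck σ (Jcp τ)) ∧
    (∀ σ τ : V × Module.Dual ℝ V, gcheck (Jcm σ) τ = gcheck σ (Jcm τ)) := by
  set N := complexStructureOf p q (jCheck g sharp J p q)
  have hJ : Jcheck = jCheck g sharp J p q :=
    funext fun σ => (hJcheck σ).trans (jCheck_apply ..).symm
  have hNp : Jcp = N := funext fun σ => by simp [hJcp, hJ, N, complexStructureOf]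
  have hNm : Jcm = ⇑(-N) := funext fun σ => by simp [hJcm, hJ, N, complexStructureOf]
  have hg : gcheck = fun σ τ => gCheck g sharp J p q σ τ := funext₂ hgcheck
  have hsq : N * N = -1 :=
    complexStructureOf_mul_self hpq (jCheck_mul_self p q hsharp_flat hflat_sharp hJsym)
  have hsa : (gCheck g sharp J p q).IsSelfAdjoint N :=
    (isSelfAdjoint_gCheck_jCheck p q hgsymm hsharp_flat hflat_sharp hJsym).complexStructureOf p q
  have hsa_neg : (gCheck g sharp J p q).IsSelfAdjoint ⇑(-N) :=
    fun σ τ => by simp only [LinearMap.neg_apply, map_neg, hsa σ τ]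
  subst hNp hNm hg
  refine ⟨fun σ => ?_, fun σ => ?_, hsa, hsa_neg⟩
  · simpa using LinearMap.congr_fun hsq σ
  · simpa using LinearMap.congr_fun hsq σ

/-- For an arbitrary `g`-symmetric `J` on a finite-dimensional `V`
with nondegenerate symmetric `g`, and reals `p q` with `p² + 4q < 0`, the maps
`J̌_± := ±((2/√(-p²-4q)) J̌ - (p/√(-p²-4q)) Id)` are generalized Norden structures
with respect to `ǧ`: they square to `-Id` and are `ǧ`-symmetric. -/
theorem generalized_norden_structures
    (V : Type*) [AddCommGroup V] [Module ℝ V] [FiniteDimensional ℝ V]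
    (g : LinearMap.BilinForm ℝ V) (hgsymm : ∀ X Y : V, g X Y = g Y X)
    (hgnd : ∀ X : V, (∀ Y : V, g X Y = 0) → X = 0)
    (sharp : Module.Dual ℝ V →ₗ[ℝ] V)
    (hsharp_flat : ∀ X : V, sharp (g X) = X)
    (hflat_sharp : ∀ α : Module.Dual ℝ V, g (sharp α) = α)
    (J : Module.End ℝ V)
    (hJsym : ∀ X Y : V, g (J X) Y = g X (J Y))
    (p q : ℝ) (hpq : p ^ 2 + 4 * q < 0)
    (Jcheck : V × Module.Dual ℝ V → V × Module.Dual ℝ V)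
    (hJcheck : ∀ σ : V × Module.Dual ℝ V,
      Jcheck σ = (J σ.1 + (-(J * J) + p • J + q • (1 : Module.End ℝ V)) (sharp σ.2),
        g σ.1 - σ.2 ∘ₗ (J : V →ₗ[ℝ] V) + p • σ.2))
    (gcheck : V × Module.Dual ℝ V → V × Module.Dual ℝ V → ℝ)
    (hgcheck : ∀ σ τ : V × Module.Dual ℝ V,
      gcheck σ τ = g σ.1 τ.1 + ((p ^ 2 + 4 * q) / 4) * g (sharp σ.2) (sharp τ.2) +
        (p / 4) * (σ.2 τ.1 + τ.2 σ.1) - (1 / 2) * (σ.2 (J τ.1) + τ.2 (J σ.1)))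
    (Jcp Jcm : V × Module.Dual ℝ V → V × Module.Dual ℝ V)
    (hJcp : ∀ σ : V × Module.Dual ℝ V,
      Jcp σ = (2 / Real.sqrt (-(p ^ 2) - 4 * q)) • Jcheck σ -
        (p / Real.sqrt (-(p ^ 2) - 4 * q)) • σ)
    (hJcm : ∀ σ : V × Module.Dual ℝ V,
      Jcm σ = -((2 / Real.sqrt (-(p ^ 2) - 4 * q)) • Jcheck σ -
        (p / Real.sqrt (-(p ^ 2) - 4 * q)) • σ)) :
    (∀ σ : V × Module.Dual ℝ V, Jcp (Jcp σ) = -σ) ∧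
    (∀ σ : V × Module.Dual ℝ V, Jcm (Jcm σ) = -σ) ∧
    (∀ σ τ : V × Module.Dual ℝ V, gcheck (Jcp σ) τ = gcheck σ (Jcp τ)) ∧
    (∀ σ τ : V × Module.Dual ℝ V, gcheck (Jcm σ) τ = gcheck σ (Jcm τ)) :=
  generalized_norden_structures_general V g hgsymm sharp hsharp_flat hflat_sharp J hJsym p q hpq
    Jcheck hJcheck gcheck hgcheck Jcp Jcm hJcp hJcm
end
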